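/- Let {𝒜_k}_{k≥1} be a sequence of labyrinth patterns with widths m_k ≥ 3, and set m(0) = 1 and m(k) = m_1⋯m_k. Let (l_1,l_2) and (r_1,r_2) be the Cartesian coordinates of the left exit and the right exit of L_∞, and for each k ≥ 1 let (x_{1,l}^k, x_{2,l}^k) be the Cartesian coordinates of the lower-left vertex of the square that is the left exit of 𝒜_k. Then l_2 = r_2 = Σ_{k=1}^∞ x_{2,l}^k / m(k−1), l_1 = 0, and r_1 = 1. -/

import Mathlib

open Set

namespace Labyrinth

/-- The closed square `S_{i,j,m} = [i/m,(i+1)/m] × [j/m,(j+1)/m]` of the `m × m` grid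
on the unit square, indexed by `p = (i,j)`. -/
def cell (m : ℕ) (p : ℕ × ℕ) : Set (ℝ × ℝ) :=
  Icc ((p.1 : ℝ) / (m : ℝ)) (((p.1 : ℝ) + 1) / (m : ℝ)) ×ˢ
    Icc ((p.2 : ℝ) / (m : ℝ)) (((p.2 : ℝ) + 1) / (m : ℝ))

/-- An `m`-pattern: a nonempty set of grid indices within the `m × m` grid. -/
def IsPattern (m : ℕ) (A : Set (ℕ × ℕ)) : Prop :=
  A.Nonempty ∧ ∀ p ∈ A, p.1 < m ∧ p.2 < m

/-- Two grid squares share a side. -/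
def SideAdj (p q : ℕ × ℕ) : Prop :=
  (p.1 = q.1 ∧ (p.2 + 1 = q.2 ∨ q.2 + 1 = p.2)) ∨
  (p.2 = q.2 ∧ (p.1 + 1 = q.1 ∨ q.1 + 1 = p.1))

/-- Two grid squares share a side or a corner. -/
def CornerAdj (p q : ℕ × ℕ) : Prop :=
  SideAdj p q ∨
  ((p.1 + 1 = q.1 ∨ q.1 + 1 = p.1) ∧ (p.2 + 1 = q.2 ∨ q.2 + 1 = p.2))

/-- The graph `𝒢(𝒜)` of a pattern: vertices are its squares, two squares being
adjacent iff they share a side. -/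
def patternGraph (A : Set (ℕ × ℕ)) : SimpleGraph ↥A where
  Adj p q := SideAdj p.1 q.1
  symm := ⟨by
    rintro ⟨p, hp⟩ ⟨q, hq⟩ h
    rcases h with ⟨h1, h2⟩ | ⟨h1, h2⟩
    · exact Or.inl ⟨h1.symm, h2.symm⟩
    · exact Or.inr ⟨h1.symm, h2.symm⟩⟩
  loopless := ⟨by
    rintro ⟨p, hp⟩ h
    rcases h with ⟨h1, h2 | h2⟩ | ⟨h1, h2 | h2⟩ <;> omega⟩

/-- The four sides of a square/pattern. -/
inductive Side | top | bottom | left | right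
deriving DecidableEq

/-- `p` is an exit square of the `m`-pattern `A` on the given side. -/
def IsExitSq (m : ℕ) (A : Set (ℕ × ℕ)) : Side → ℕ × ℕ → Prop
  | .top, p => p ∈ A ∧ p.2 = m - 1 ∧ (p.1, 0) ∈ A
  | .bottom, p => p ∈ A ∧ p.2 = 0 ∧ (p.1, m - 1) ∈ A
  | .left, p => p ∈ A ∧ p.1 = 0 ∧ (m - 1, p.2) ∈ A
  | .right, p => p ∈ A ∧ p.1 = m - 1 ∧ (0, p.2) ∈ A

/-- An `m × m`-labyrinth pattern: a nonempty `m`-pattern, `m ≥ 3`, whose graph is a tree,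
with exactly one vertical and exactly one horizontal exit pair, and no two white squares
at diagonally opposite corners. -/
def IsLabyrinthPattern (m : ℕ) (A : Set (ℕ × ℕ)) : Prop :=
  3 ≤ m ∧ IsPattern m A ∧ (patternGraph A).IsTree ∧
    (∃! i : ℕ, (i, m - 1) ∈ A ∧ (i, 0) ∈ A) ∧
    (∃! j : ℕ, (0, j) ∈ A ∧ (m - 1, j) ∈ A) ∧
    ((0, 0) ∈ A → (m - 1, m - 1) ∉ A) ∧
    ((m - 1, 0) ∈ A → (0, m - 1) ∉ A)

/-- A wild labyrinth pattern: the graph is merely connected, and there is at least one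
vertical and at least one horizontal exit pair. -/
def IsWildLabyrinthPattern (m : ℕ) (A : Set (ℕ × ℕ)) : Prop :=
  3 ≤ m ∧ IsPattern m A ∧ (patternGraph A).Connected ∧
    (∃ i : ℕ, (i, m - 1) ∈ A ∧ (i, 0) ∈ A) ∧
    (∃ j : ℕ, (0, j) ∈ A ∧ (m - 1, j) ∈ A) ∧
    ((0, 0) ∈ A → (m - 1, m - 1) ∉ A) ∧
    ((m - 1, 0) ∈ A → (0, m - 1) ∉ A)

/-- One substitution step: place a copy of the pattern `A'` (of width `m'`) into each
white square of `W`. -/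
def subst (m' : ℕ) (A' W : Set (ℕ × ℕ)) : Set (ℕ × ℕ) :=
  {q | ∃ p ∈ W, ∃ r ∈ A', q = (p.1 * m' + r.1, p.2 * m' + r.2)}

/-- The white squares `𝒲_n` of level `n`; `whites m A n` is the paper's `𝒲_n`, where
`A k` is the paper's pattern `𝒜_{k+1}` of width `m k = m_{k+1}`; level `0` is the whole
unit square. -/
def whites (m : ℕ → ℕ) (A : ℕ → Set (ℕ × ℕ)) : ℕ → Set (ℕ × ℕ)
  | 0 => {(0, 0)}
  | n + 1 => subst (m n) (A n) (whites m A n)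

/-- `m(n) = m_1 ⋯ m_n`. -/
def mProd (m : ℕ → ℕ) (n : ℕ) : ℕ := ∏ k ∈ Finset.range n, m k

/-- The black squares `ℬ_n` of level `n`. -/
def blacks (m : ℕ → ℕ) (A : ℕ → Set (ℕ × ℕ)) (n : ℕ) : Set (ℕ × ℕ) :=
  {p : ℕ × ℕ | p.1 < mProd m n ∧ p.2 < mProd m n} \ whites m A n

/-- A border square of the `m × m` grid. -/
def IsBorder (m : ℕ) (p : ℕ × ℕ) : Prop :=
  p.1 = 0 ∨ p.2 = 0 ∨ p.1 = m - 1 ∨ p.2 = m - 1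

/-- `L_n`, the union of the white squares of level `n`. -/
def levelSet (m : ℕ → ℕ) (A : ℕ → Set (ℕ × ℕ)) (n : ℕ) : Set (ℝ × ℝ) :=
  ⋃ p ∈ whites m A n, cell (mProd m n) p

/-- `L_∞ = ⋂_{n ≥ 1} L_n` (the term `n = 0` is the whole unit square). -/
def limitSet (m : ℕ → ℕ) (A : ℕ → Set (ℕ × ℕ)) : Set (ℝ × ℝ) :=
  ⋂ n, levelSet m A n

def unitSquare : Set (ℝ × ℝ) := Icc (0 : ℝ) 1 ×ˢ Icc (0 : ℝ) 1

/-- A path in a graph (with adjacency `Adj`, within the vertex set `A`)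
from `u` to `v`: a nonempty list of distinct, consecutively adjacent squares of `A`,
starting at `u` and ending at `v`. -/
def IsPathIn (Adj : ℕ × ℕ → ℕ × ℕ → Prop) (A : Set (ℕ × ℕ))
    (l : List (ℕ × ℕ)) (u v : ℕ × ℕ) : Prop :=
  l ≠ [] ∧ l.Nodup ∧ l.IsChain Adj ∧ (∀ p ∈ l, p ∈ A) ∧
    l.head? = some u ∧ l.getLast? = some v

/-- `s` is an arc between `a` and `b`: a homeomorphic image of `[0,1]`
with endpoints `a` and `b`. -/
def IsArc (s : Set (ℝ × ℝ)) (a b : ℝ × ℝ) : Prop :=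
  ∃ f : ℝ → ℝ × ℝ, ContinuousOn f (Icc 0 1) ∧ InjOn f (Icc 0 1) ∧
    f '' Icc 0 1 = s ∧ f 0 = a ∧ f 1 = b

/-- `e` is the exit point of `L_∞` of the given type: for every `n ≥ 1` it lies in the
exit square of that type of `𝒲_n`. -/
def IsExitPoint (m : ℕ → ℕ) (A : ℕ → Set (ℕ × ℕ)) (s : Side) (e : ℝ × ℝ) : Prop :=
  ∀ n, 1 ≤ n → ∃ p, IsExitSq (mProd m n) (whites m A n) s p ∧ e ∈ cell (mProd m n) p

/-- The (closed) edge of the grid square `p` of the `m × m` grid on the given side. -/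
def cellEdge (m : ℕ) (p : ℕ × ℕ) : Side → Set (ℝ × ℝ)
  | .top => Icc ((p.1 : ℝ) / (m : ℝ)) (((p.1 : ℝ) + 1) / (m : ℝ)) ×ˢ {((p.2 : ℝ) + 1) / (m : ℝ)}
  | .bottom => Icc ((p.1 : ℝ) / (m : ℝ)) (((p.1 : ℝ) + 1) / (m : ℝ)) ×ˢ {(p.2 : ℝ) / (m : ℝ)}
  | .left => {(p.1 : ℝ) / (m : ℝ)} ×ˢ Icc ((p.2 : ℝ) / (m : ℝ)) (((p.2 : ℝ) + 1) / (m : ℝ))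
  | .right => {((p.1 : ℝ) + 1) / (m : ℝ)} ×ˢ Icc ((p.2 : ℝ) / (m : ℝ)) (((p.2 : ℝ) + 1) / (m : ℝ))

/-- Directions in the grid. -/
inductive Dir | up | down | left | right
deriving DecidableEq

/-- `stepDir p q d`: the square `q` is the neighbour of `p` in direction `d`. -/
def stepDir (p q : ℕ × ℕ) : Dir → Prop
  | .up => q.1 = p.1 ∧ q.2 = p.2 + 1
  | .down => q.1 = p.1 ∧ p.2 = q.2 + 1
  | .left => q.2 = p.2 ∧ p.1 = q.1 + 1
  | .right => q.2 = p.2 ∧ q.1 = p.1 + 1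

/-- The outward direction through a given side. -/
def outDir : Side → Dir
  | .top => .up
  | .bottom => .down
  | .left => .left
  | .right => .right

def sideOfDir : Dir → Side
  | .up => .top
  | .down => .bottom
  | .left => .left
  | .right => .right

/-- The six types `A, B, C, D, E, F` of paths (and of squares within a path). -/
inductive PTy | A | B | C | D | E | F
deriving DecidableEq

instance : Fintype PTy :=
  ⟨{.A, .B, .C, .D, .E, .F}, fun x => by cases x <;> simp⟩

/-- The exit at which the `x`-path starts: `A`: top→bottom, `B`: left→right,
`C`: top→right, `D`: right→bottom, `E`: bottom→left, `F`: left→top. -/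
def startSide : PTy → Side
  | .A => .top
  | .B => .left
  | .C => .top
  | .D => .right
  | .E => .bottom
  | .F => .left

/-- The exit at which the `x`-path ends. -/
def endSide : PTy → Side
  | .A => .bottom
  | .B => .right
  | .C => .right
  | .D => .bottom
  | .E => .left
  | .F => .top

/-- The two neighbour directions characterising a square of each type. -/
def ptyDirPair : PTy → Dir × Dir
  | .A => (.up, .down)
  | .B => (.left, .right)
  | .C => (.up, .right)
  | .D => (.right, .down)
  | .E => (.down, .left)
  | .F => (.left, .up)

def ptyDirs (τ : PTy) : Set Dir := {(ptyDirPair τ).1, (ptyDirPair τ).2}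

/-- The set of directions from the `i`-th square of the path `l` towards its neighbours
within the path, where the first and last squares (exit squares) are regarded as having
an additional neighbour outside the unit square, in directions `dstart`, `dend`
respectively. -/
def pathDirs (l : List (ℕ × ℕ)) (dstart dend : Dir) (i : ℕ) : Set Dir :=
  {d | (∃ p q, l[i]? = some p ∧ l[i - 1]? = some q ∧ 0 < i ∧ stepDir p q d)
    ∨ (∃ p q, l[i]? = some p ∧ l[i + 1]? = some q ∧ stepDir p q d)
    ∨ (i = 0 ∧ d = dstart)
    ∨ (i + 1 = l.length ∧ d = dend)}

/-- The number of `τ`-squares of the path `l` (with outward exit directions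
`dstart`, `dend`). -/
noncomputable def countTy (l : List (ℕ × ℕ)) (dstart dend : Dir) (τ : PTy) : ℕ :=
  {i | i < l.length ∧ pathDirs l dstart dend i = ptyDirs τ}.ncard

/-- `M(n) = M_1 ⋅ M_2 ⋅ ⋯ ⋅ M_n`. -/
def matProd (M : ℕ → Matrix PTy PTy ℕ) (n : ℕ) : Matrix PTy PTy ℕ :=
  ((List.range n).map M).prod

/-- A simple closed curve: a subspace homeomorphic to the circle. -/
def IsSimpleClosedCurve (s : Set (ℝ × ℝ)) : Prop :=
  Nonempty (↥s ≃ₜ AddCircle (1 : ℝ))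

/-- The number of `δ`-mesh squares meeting `E`. -/
noncomputable def meshCount (δ : ℝ) (E : Set (ℝ × ℝ)) : ℕ :=
  {q : ℤ × ℤ | (E ∩ (Icc ((q.1 : ℝ) * δ) (((q.1 : ℝ) + 1) * δ) ×ˢ
      Icc ((q.2 : ℝ) * δ) (((q.2 : ℝ) + 1) * δ))).Nonempty}.ncard

/-- The lower box-counting dimension of `E ⊆ ℝ²`. -/
noncomputable def lowerBoxDim (E : Set (ℝ × ℝ)) : ℝ :=
  Filter.liminf (fun δ : ℝ => Real.log (meshCount δ E) / (-Real.log δ)) (nhdsWithin 0 (Ioi 0))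

/-- The upper box-counting dimension of `E ⊆ ℝ²`. -/
noncomputable def upperBoxDim (E : Set (ℝ × ℝ)) : ℝ :=
  Filter.limsup (fun δ : ℝ => Real.log (meshCount δ E) / (-Real.log δ)) (nhdsWithin 0 (Ioi 0))

/- Since each pattern has a unique horizontal exit pair, the left and right exit squares of
`𝒲_{n+1}` lie in the copies of `𝒜_{n+1}` placed in the left and right exit squares of `𝒲_n`,
in the row of the left exit of `𝒜_{n+1}`. Hence both lie in row `J(n)` of the `m(n)`-grid, where
`J(0) = 0` and `J(n+1) = J(n) m_{n+1} + lr`, so that `J(n) / m(n)` is the `n`-th partial sum of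
the series. The exit points lie in these squares, whose side `1 / m(n)` tends to `0`, so their
coordinates are the limits of the lower-left corners. -/

open Filter Topology

def exitRow (m lr : ℕ → ℕ) : ℕ → ℕ
  | 0 => 0
  | n + 1 => exitRow m lr n * m n + lr n

lemma mProd_succ (m : ℕ → ℕ) (n : ℕ) : mProd m (n + 1) = mProd m n * m n :=
  Finset.prod_range_succ m n

lemma mProd_pos {m : ℕ → ℕ} (hm : ∀ k, 0 < m k) (n : ℕ) : 0 < mProd m n :=
  Finset.prod_pos fun k _ => hm k

lemma two_pow_le_mProd {m : ℕ → ℕ} (hm : ∀ k, 2 ≤ m k) (n : ℕ) : 2 ^ n ≤ mProd m n := by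
  induction n with
  | zero => simp [mProd]
  | succ n ih => rw [mProd_succ, pow_succ]; exact Nat.mul_le_mul ih (hm n)

lemma tendsto_mProd_atTop {m : ℕ → ℕ} (hm : ∀ k, 2 ≤ m k) :
    Tendsto (fun n => (mProd m n : ℝ)) atTop atTop :=
  tendsto_natCast_atTop_atTop.comp <| tendsto_atTop_mono
    (fun n => Nat.lt_two_pow_self.le.trans (two_pow_le_mProd hm n)) tendsto_id

lemma tendsto_mProd_pred_div {m : ℕ → ℕ} (hm : ∀ k, 2 ≤ m k) :
    Tendsto (fun n => ((mProd m n - 1 : ℕ) : ℝ) / mProd m n) atTop (𝓝 1) := by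
  have hpos n : 0 < mProd m n := mProd_pos (fun k => zero_lt_two.trans_le (hm k)) n
  have h : ∀ n, ((mProd m n - 1 : ℕ) : ℝ) / mProd m n = 1 - (mProd m n : ℝ)⁻¹ := fun n => by
    have : (mProd m n : ℝ) ≠ 0 := by exact_mod_cast (hpos n).ne'
    rw [Nat.cast_sub (hpos n), Nat.cast_one, sub_div, div_self this, one_div]
  simpa [h] using (tendsto_mProd_atTop hm).inv_tendsto_atTop.const_sub (1 : ℝ)

lemma eq_and_eq_of_mul_add_eq {m a b c d : ℕ} (hb : b < m) (hd : d < m)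
    (h : a * m + b = c * m + d) : a = c ∧ b = d := by
  have hm : 0 < m := (Nat.zero_le b).trans_lt hb
  have hab := (Nat.div_mod_unique (a := a * m + b) (d := a) (c := b) hm).2 ⟨by ring, hb⟩
  have hcd := (Nat.div_mod_unique (a := a * m + b) (d := c) (c := d) hm).2 ⟨by rw [h]; ring, hd⟩
  exact ⟨hab.1.symm.trans hcd.1, hab.2.symm.trans hcd.2⟩

lemma tendsto_corner_of_mem_cell {M : ℕ → ℕ} {p : ℕ → ℕ × ℕ} {x : ℝ × ℝ}
    (hM : Tendsto (fun n => (M n : ℝ)) atTop atTop) (hx : ∀ᶠ n in atTop, x ∈ cell (M n) (p n)) :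
    Tendsto (fun n => ((p n).1 : ℝ) / M n) atTop (𝓝 x.1) ∧
      Tendsto (fun n => ((p n).2 : ℝ) / M n) atTop (𝓝 x.2) := by
  have hε : Tendsto (fun n => (M n : ℝ)⁻¹) atTop (𝓝 0) := hM.inv_tendsto_atTop
  have key : ∀ {a : ℕ → ℕ} {y : ℝ},
      (∀ᶠ n in atTop, y ∈ Icc ((a n : ℝ) / M n) (((a n : ℝ) + 1) / M n)) →
      Tendsto (fun n => (a n : ℝ) / M n) atTop (𝓝 y) := fun {a y} h => by
    rw [tendsto_iff_dist_tendsto_zero]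
    refine squeeze_zero' (Eventually.of_forall fun n => dist_nonneg) ?_ hε
    filter_upwards [h] with n ⟨h₁, h₂⟩
    rw [Real.dist_eq, abs_sub_comm, abs_of_nonneg (sub_nonneg.2 h₁)]
    rw [add_div, one_div] at h₂
    linarith
  exact ⟨key (hx.mono fun n h => h.1), key (hx.mono fun n h => h.2)⟩

section ExitRow

variable {m : ℕ → ℕ} {A : ℕ → Set (ℕ × ℕ)} {lr : ℕ → ℕ}

lemma eq_exitRow_of_mem_whites (hm : ∀ k, 0 < m k)
    (hA : ∀ k, ∀ p ∈ A k, p.1 < m k ∧ p.2 < m k)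
    (hlr : ∀ k j, (0, j) ∈ A k → (m k - 1, j) ∈ A k → j = lr k) :
    ∀ n j, (0, j) ∈ whites m A n → (mProd m n - 1, j) ∈ whites m A n → j = exitRow m lr n
  | 0, j, h0, _ => by simpa [whites, exitRow] using h0
  | n + 1, j, ⟨⟨p1, p2⟩, hp, ⟨r1, r2⟩, hr, hpr⟩, ⟨⟨q1, q2⟩, hq, ⟨s1, s2⟩, hs, hqs⟩ => by
    simp only [Prod.mk.injEq] at hpr hqs
    obtain ⟨hr1, hr2⟩ := hA n _ hr
    obtain ⟨hs1, hs2⟩ := hA n _ hs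
    have hM := mProd_pos hm n
    have hlast : mProd m (n + 1) - 1 = (mProd m n - 1) * m n + (m n - 1) := by
      rw [mProd_succ, Nat.sub_mul, one_mul]
      have := Nat.le_mul_of_pos_left (m n) hM
      omega
    obtain ⟨rfl, rfl⟩ := eq_and_eq_of_mul_add_eq hr1 (hm n) (hpr.1.symm.trans (zero_mul _).symm)
    obtain ⟨rfl, rfl⟩ := eq_and_eq_of_mul_add_eq hs1 (Nat.sub_lt (hm n) one_pos)
      (hqs.1.symm.trans hlast)
    obtain ⟨rfl, rfl⟩ := eq_and_eq_of_mul_add_eq hr2 hs2 (hpr.2.symm.trans hqs.2)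
    rw [hpr.2, exitRow, eq_exitRow_of_mem_whites hm hA hlr n p2 hp hq, hlr n r2 hr hs]

lemma eq_of_isExitSq_left (hm : ∀ k, 0 < m k) (hA : ∀ k, ∀ p ∈ A k, p.1 < m k ∧ p.2 < m k)
    (hlr : ∀ k j, (0, j) ∈ A k → (m k - 1, j) ∈ A k → j = lr k) {n : ℕ} {p : ℕ × ℕ}
    (hp : IsExitSq (mProd m n) (whites m A n) Side.left p) : p = (0, exitRow m lr n) := by
  obtain ⟨i, j⟩ := p
  obtain ⟨hW, rfl, hW'⟩ := hp
  rw [eq_exitRow_of_mem_whites hm hA hlr n j hW hW']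

lemma eq_of_isExitSq_right (hm : ∀ k, 0 < m k) (hA : ∀ k, ∀ p ∈ A k, p.1 < m k ∧ p.2 < m k)
    (hlr : ∀ k j, (0, j) ∈ A k → (m k - 1, j) ∈ A k → j = lr k) {n : ℕ} {p : ℕ × ℕ}
    (hp : IsExitSq (mProd m n) (whites m A n) Side.right p) :
    p = (mProd m n - 1, exitRow m lr n) := by
  obtain ⟨i, j⟩ := p
  obtain ⟨hW, rfl, hW'⟩ := hp
  rw [eq_exitRow_of_mem_whites hm hA hlr n j hW' hW]

lemma sum_range_eq_exitRow_div (hm : ∀ k, 0 < m k) (n : ℕ) :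
    ∑ k ∈ Finset.range n, ((lr k : ℝ) / m k) / mProd m k = (exitRow m lr n : ℝ) / mProd m n := by
  induction n with
  | zero => simp [exitRow]
  | succ n ih =>
    have hM : (mProd m n : ℝ) ≠ 0 := by exact_mod_cast (mProd_pos hm n).ne'
    have hmn : (m n : ℝ) ≠ 0 := by exact_mod_cast (hm n).ne'
    rw [Finset.sum_range_succ, ih, exitRow, mProd_succ]
    push_cast
    field_simp

lemma hasSum_of_tendsto_exitRow_div (hm : ∀ k, 0 < m k) {y : ℝ}
    (h : Tendsto (fun n => (exitRow m lr n : ℝ) / mProd m n) atTop (𝓝 y)) :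
    HasSum (fun k => ((lr k : ℝ) / m k) / mProd m k) y := by
  rw [hasSum_iff_tendsto_nat_of_nonneg (fun k => by positivity)]
  simpa only [sum_range_eq_exitRow_div hm] using h

end ExitRow

end Labyrinth
open Labyrinth in
/-- `lr k` is the row of the left exit square of `𝒜_{k+1}`, whose lower-left vertex is thus
`(0, lr k / m k)`. -/
theorem left_right_exit_coords (m : ℕ → ℕ) (A : ℕ → Set (ℕ × ℕ))
    (hlab : ∀ k, IsLabyrinthPattern (m k) (A k))
    (l r : ℝ × ℝ)
    (hl : IsExitPoint m A Side.left l) (hr : IsExitPoint m A Side.right r)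
    (lr : ℕ → ℕ) (hlr : ∀ k, IsExitSq (m k) (A k) Side.left (0, lr k)) :
    l.2 = ∑' k, ((lr k : ℝ) / (m k : ℝ)) / (mProd m k : ℝ) ∧
    r.2 = ∑' k, ((lr k : ℝ) / (m k : ℝ)) / (mProd m k : ℝ) ∧
    l.1 = 0 ∧ r.1 = 1 := by
  have hm : ∀ k, 2 ≤ m k := fun k => le_trans (by norm_num) (hlab k).1
  have hm₀ : ∀ k, 0 < m k := fun k => zero_lt_two.trans_le (hm k)
  have hA : ∀ k, ∀ p ∈ A k, p.1 < m k ∧ p.2 < m k := fun k => (hlab k).2.1.2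
  have hrow : ∀ k j, (0, j) ∈ A k → (m k - 1, j) ∈ A k → j = lr k := fun k j h₀ h₁ =>
    (hlab k).2.2.2.2.1.unique ⟨h₀, h₁⟩ ⟨(hlr k).1, (hlr k).2.2⟩
  have hL : ∀ᶠ n in Filter.atTop, l ∈ cell (mProd m n) (0, exitRow m lr n) :=
    Filter.eventually_atTop.2 ⟨1, fun n hn => by
      obtain ⟨p, hp, hlp⟩ := hl n hn
      rwa [eq_of_isExitSq_left hm₀ hA hrow hp] at hlp⟩
  have hR : ∀ᶠ n in Filter.atTop, r ∈ cell (mProd m n) (mProd m n - 1, exitRow m lr n) :=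
    Filter.eventually_atTop.2 ⟨1, fun n hn => by
      obtain ⟨p, hp, hrp⟩ := hr n hn
      rwa [eq_of_isExitSq_right hm₀ hA hrow hp] at hrp⟩
  obtain ⟨hl₁, hl₂⟩ := tendsto_corner_of_mem_cell (tendsto_mProd_atTop hm) hL
  obtain ⟨hr₁, hr₂⟩ := tendsto_corner_of_mem_cell (tendsto_mProd_atTop hm) hR
  refine ⟨(hasSum_of_tendsto_exitRow_div hm₀ hl₂).tsum_eq.symm,
    (hasSum_of_tendsto_exitRow_div hm₀ hr₂).tsum_eq.symm, ?_,
    tendsto_nhds_unique hr₁ (tendsto_mProd_pred_div hm)⟩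
  simpa [eq_comm] using hl₁
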